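/- For all real numbers k and all δ ≥ 0, the real part of √(k² + iδ) satisfies |k| ≤ Re √(k² + iδ) ≤ √(k² + δ/2), where the square root branch is √(r e^{iθ}) = √r e^{iθ/2}, θ ∈ [0, 2π). -/

import Mathlib

open Complex Real

/-- The square root with branch `√(r e^{iθ}) = √r e^{iθ/2}`, `θ ∈ [0, 2π)`. -/
noncomputable def branchSqrt (z : ℂ) : ℂ :=
  if z = 0 then 0 else
    (Real.sqrt ‖z‖ : ℂ) *
      Complex.exp (Complex.I *
        (((if Complex.arg z < 0 then Complex.arg z + 2 * Real.pi else Complex.arg z) : ℝ) / 2))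

/-- In the closed upper half-plane the branch agrees with the principal one, so its real part is
given by the half-angle formula `cos (θ / 2) = √((1 + cos θ) / 2)`. -/
theorem re_branchSqrt_of_im_nonneg {z : ℂ} (hz : 0 ≤ z.im) :
    (branchSqrt z).re = √((‖z‖ + z.re) / 2) := by
  rcases eq_or_ne z 0 with rfl | hz0
  · simp [branchSqrt]
  have harg : 0 ≤ arg z := arg_nonneg_iff.mpr hz
  have hexp : I * ((arg z : ℂ) / 2) = ((arg z / 2 : ℝ) : ℂ) * I := by push_cast; ring
  rw [branchSqrt, if_neg hz0, if_neg harg.not_gt, hexp, re_ofReal_mul, exp_ofReal_mul_I_re,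
    Real.cos_half (by linarith [Real.pi_pos]) (arg_le_pi z), cos_arg hz0,
    ← Real.sqrt_mul (norm_nonneg z)]
  congr 1
  field_simp

theorem re_branchSqrt_add_bounds (k δ : ℝ) (hδ : 0 ≤ δ) :
    |k| ≤ (branchSqrt ((k : ℂ) ^ 2 + (δ : ℂ) * Complex.I)).re ∧
      (branchSqrt ((k : ℂ) ^ 2 + (δ : ℂ) * Complex.I)).re ≤ Real.sqrt (k ^ 2 + δ / 2) := by
  set z : ℂ := (k : ℂ) ^ 2 + (δ : ℂ) * I
  have hre : z.re = k ^ 2 := by simp [z, ← ofReal_pow]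
  have him : z.im = δ := by simp [z, ← ofReal_pow]
  have hnorm_le : ‖z‖ ≤ k ^ 2 + δ := by
    simpa [hre, him, abs_of_nonneg hδ] using norm_le_abs_re_add_abs_im z
  rw [re_branchSqrt_of_im_nonneg (him ▸ hδ), hre]
  constructor
  · calc |k| = √(k ^ 2) := (sqrt_sq_eq_abs k).symm
      _ ≤ √((‖z‖ + k ^ 2) / 2) := sqrt_le_sqrt (by linarith [hre ▸ re_le_norm z])
  · exact sqrt_le_sqrt (by linarith)
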